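/- Let A be a finite abelian group of order n, let σ, ρ ∈ A be nontrivial, set d = |⟨σ⟩ ∩ ⟨ρ⟩| and h ∈ (ℤ/dℤ)× with ρ^{o(ρ)/d} = (σ^{o(σ)/d})^h. Define γ_{σ,ρ} = (1/n)·∑_{χ ∈ Â} u_{χ,σ}·u_{χ,ρ}/(o(σ)·o(ρ)). Then γ_{σ,ρ} = φ_{h,d}(0)/(o(σ)o(ρ)) + (o(σ)-1)(o(ρ)-1)/(4·o(σ)·o(ρ)), where φ_{h,d}(0) = ∑_{k=1}^{d-1} 1/((1-e(kh/d))(1-e(-k/d))). -/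

import Mathlib

/-- `e(x) = exp(2πi x)`. -/
noncomputable def ee (x : ℝ) : ℂ := Complex.exp (2 * Real.pi * Complex.I * x)

/-- The generalized Dedekind sum
`φ_{h,d}(s) = ∑_{k=1}^{d-1} e(ks/d) / ((1 - e(kh/d)) (1 - e(-k/d)))`. -/
noncomputable def phi (h : ℤ) (d : ℕ) (s : ℤ) : ℂ :=
  ∑ k ∈ Finset.Ico 1 d,
    ee ((k : ℝ) * (s : ℝ) / d) /
      ((1 - ee ((k : ℝ) * (h : ℝ) / d)) * (1 - ee (-(k : ℝ) / d)))

/-!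
For `u < m` and `ζ = e(1/m)`, the finite Fourier expansion of the sawtooth,
`u = (m - 1)/2 - ∑_{k=1}^{m-1} ζ^{uk} / (1 - ζ^{-k})`, writes `u_{χ,σ}` as a constant minus a
linear combination of the values `χ(σ^k)`. Expanding `u_{χ,σ} u_{χ,ρ}` and summing over `χ`,
orthogonality of characters kills the linear terms and keeps, from the quadratic term, only
the pairs `(k, l)` with `σ^k ρ^l = 1`. Since `⟨σ⟩ ∩ ⟨ρ⟩` has order `d`, these are the
pairs with `l = (o(ρ)/d) κ`, `1 ≤ κ < d`, and `σ^k = σ^{-(o(σ)/d) h κ}`; their coefficients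
are exactly the terms of `φ_{h,d}(0)`.
-/

open Finset

lemma sum_Ico_one_pow_eq_neg_one {K : Type*} [Field K] {w : K} {m : ℕ} (hm : 0 < m)
    (hw : w ≠ 1) (hwm : w ^ m = 1) : ∑ k ∈ Ico 1 m, w ^ k = -1 := by
  have hgeom := geom_sum_eq hw m
  rw [hwm, sub_self, zero_div, range_eq_Ico, sum_eq_sum_Ico_succ_bot hm, pow_zero] at hgeom
  linear_combination hgeom

lemma inv_one_sub_inv_add_inv_one_sub {K : Type*} [Field K] {x : K} (hx0 : x ≠ 0)
    (hx1 : x ≠ 1) :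
    (1 - x⁻¹)⁻¹ + (1 - x)⁻¹ = 1 := by
  have : 1 - x ≠ 0 := sub_ne_zero.mpr hx1.symm
  have : x - 1 ≠ 0 := sub_ne_zero.mpr hx1
  field_simp
  ring

namespace IsPrimitiveRoot

variable {K : Type*} [Field K] {ζ : K} {m : ℕ}

lemma pow_sub_eq_inv_pow (hζ : IsPrimitiveRoot ζ m) {k : ℕ} (hk : k ≤ m) :
    ζ ^ (m - k) = (ζ ^ k)⁻¹ :=
  eq_inv_of_mul_eq_one_left (by rw [← pow_add, Nat.sub_add_cancel hk, hζ.pow_eq_one])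

lemma sum_inv_one_sub_inv_pow [NeZero (2 : K)] (hζ : IsPrimitiveRoot ζ m) (hm : 0 < m) :
    ∑ k ∈ Ico 1 m, (1 - (ζ ^ k)⁻¹)⁻¹ = ((m : K) - 1) / 2 := by
  have hreflect :
      ∑ k ∈ Ico 1 m, (1 - (ζ ^ k)⁻¹)⁻¹ = ∑ k ∈ Ico 1 m, (1 - ζ ^ k)⁻¹ := by
    calc ∑ k ∈ Ico 1 m, (1 - (ζ ^ k)⁻¹)⁻¹ = ∑ k ∈ Ico 1 m, (1 - ζ ^ (m - k))⁻¹ :=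
          sum_congr rfl fun k hk => by rw [hζ.pow_sub_eq_inv_pow (mem_Ico.mp hk).2.le]
      _ = ∑ k ∈ Ico 1 m, (1 - ζ ^ k)⁻¹ := by
          rw [sum_Ico_reflect (fun k => (1 - ζ ^ k)⁻¹) 1 (Nat.le_succ m),
            Nat.add_sub_cancel_left, Nat.add_sub_cancel]
  have hpair : ∑ k ∈ Ico 1 m, ((1 - (ζ ^ k)⁻¹)⁻¹ + (1 - ζ ^ k)⁻¹) = m - 1 := by
    have hone : ∀ k ∈ Ico 1 m, (1 - (ζ ^ k)⁻¹)⁻¹ + (1 - ζ ^ k)⁻¹ = 1 := by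
      intro k hk
      obtain ⟨hk1, hkm⟩ := mem_Ico.mp hk
      exact inv_one_sub_inv_add_inv_one_sub (pow_ne_zero _ (hζ.ne_zero hm.ne'))
        (hζ.pow_ne_one_of_pos_of_lt (Nat.one_le_iff_ne_zero.mp hk1) hkm)
    rw [sum_congr rfl hone]
    simp [Nat.cast_sub hm]
  rw [sum_add_distrib, ← hreflect] at hpair
  rw [eq_div_iff two_ne_zero]
  linear_combination hpair

lemma sum_pow_mul_inv_one_sub_inv_pow [NeZero (2 : K)] (hζ : IsPrimitiveRoot ζ m) {u : ℕ}
    (hu : u < m) :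
    ∑ k ∈ Ico 1 m, (ζ ^ u) ^ k * (1 - (ζ ^ k)⁻¹)⁻¹ = ((m : K) - 1) / 2 - u := by
  induction u with
  | zero => simpa using hζ.sum_inv_one_sub_inv_pow hu
  | succ u ih =>
    have hm : 0 < m := by omega
    have hstep : ∀ k ∈ Ico 1 m, (ζ ^ (u + 1)) ^ k * (1 - (ζ ^ k)⁻¹)⁻¹
        = (ζ ^ u) ^ k * (1 - (ζ ^ k)⁻¹)⁻¹ + (ζ ^ (u + 1)) ^ k := by
      intro k hk
      obtain ⟨hk1, hkm⟩ := mem_Ico.mp hk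
      have h0 : ζ ^ k ≠ 0 := pow_ne_zero _ (hζ.ne_zero hm.ne')
      have h1 : ζ ^ k - 1 ≠ 0 :=
        sub_ne_zero.mpr (hζ.pow_ne_one_of_pos_of_lt (Nat.one_le_iff_ne_zero.mp hk1) hkm)
      have hc : (ζ ^ k - 1) * (1 - (ζ ^ k)⁻¹)⁻¹ = ζ ^ k := by
        rw [inv_eq_one_div (ζ ^ k), one_sub_div h0]
        field_simp
      rw [pow_succ, mul_pow]
      linear_combination (ζ ^ u) ^ k * hc
    have hne : ζ ^ (u + 1) ≠ 1 := hζ.pow_ne_one_of_pos_of_lt u.succ_ne_zero hu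
    have hpow : (ζ ^ (u + 1)) ^ m = 1 := by rw [pow_right_comm, hζ.pow_eq_one, one_pow]
    rw [sum_congr rfl hstep, sum_add_distrib, ih (by omega),
      sum_Ico_one_pow_eq_neg_one hm hne hpow]
    push_cast
    ring

end IsPrimitiveRoot

lemma ee_add (x y : ℝ) : ee (x + y) = ee x * ee y := by
  rw [ee, ee, ee, ← Complex.exp_add]
  push_cast
  ring_nf

lemma ee_neg (x : ℝ) : ee (-x) = (ee x)⁻¹ := by
  rw [ee, ee, ← Complex.exp_neg]
  push_cast
  ring_nf

lemma ee_natCast_mul (n : ℕ) (x : ℝ) : ee (n * x) = ee x ^ n := by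
  rw [ee, ee, ← Complex.exp_nat_mul]
  push_cast
  ring_nf

lemma ee_add_intCast (x : ℝ) (n : ℤ) : ee (x + n) = ee x := by
  have hn : ee n = 1 := by
    rw [ee, mul_comm]
    exact_mod_cast Complex.exp_int_mul_two_pi_mul_I n
  rw [ee_add, hn, mul_one]

lemma isPrimitiveRoot_ee {m : ℕ} (hm : m ≠ 0) : IsPrimitiveRoot (ee (1 / m)) m := by
  convert Complex.isPrimitiveRoot_exp m hm using 2
  rw [ee, Complex.ofReal_div, Complex.ofReal_one, Complex.ofReal_natCast, mul_one_div]

lemma ee_div_natCast (k m : ℕ) : ee (k / m) = ee (1 / m) ^ k := by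
  rw [← ee_natCast_mul, mul_one_div]

lemma natCast_eq_sub_sum_ee {m u : ℕ} (hu : u < m) :
    (u : ℂ) = ((m : ℂ) - 1) / 2
      - ∑ k ∈ Ico 1 m, ee (u / m) ^ k * (1 - ee (-k / m))⁻¹ := by
  have hζ := isPrimitiveRoot_ee (Nat.ne_zero_of_lt hu)
  simp only [neg_div, ee_neg, ee_div_natCast]
  rw [hζ.sum_pow_mul_inv_one_sub_inv_pow hu]
  ring

lemma ee_neg_div_eq_of_dvd {k j e d m : ℕ} (hm : m ≠ 0) (hed : e * d = m)
    (hdvd : m ∣ k + e * j) : ee (-k / m) = ee (j / d) := by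
  obtain ⟨t, ht⟩ := hdvd
  have he : (e : ℝ) ≠ 0 := by exact_mod_cast left_ne_zero_of_mul (hed ▸ hm)
  have hd : (d : ℝ) ≠ 0 := by exact_mod_cast right_ne_zero_of_mul (hed ▸ hm)
  rw [← ee_add_intCast (j / d) (-t)]
  congr 1
  rw [← hed] at ht ⊢
  have ht' : (k : ℝ) + e * j = e * d * t := by exact_mod_cast ht
  push_cast
  field_simp
  linear_combination -ht'

lemma phi_zero (h : ℤ) (d : ℕ) :
    phi h d 0 = ∑ k ∈ Ico 1 d, (1 - ee (k * h / d))⁻¹ * (1 - ee (-k / d))⁻¹ := by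
  simp [phi, ee, mul_comm]


section Characters

variable {A K : Type*} [CommGroup A] [Finite A] [Field K]
  [HasEnoughRootsOfUnity K (Monoid.exponent A)] [Fintype (A →* Kˣ)]

lemma sum_monoidHom_apply [DecidableEq A] (a : A) :
    ∑ χ : A →* Kˣ, (χ a : K) = if a = 1 then (Nat.card A : K) else 0 := by
  split_ifs with ha
  · simp [ha, ← Nat.card_eq_fintype_card, CommGroup.card_monoidHom_of_hasEnoughRootsOfUnity]
  obtain ⟨ψ, hψ⟩ := CommGroup.exists_apply_ne_one_of_hasEnoughRootsOfUnity A K ha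
  have hψ' : (ψ a : K) ≠ 1 := fun h => hψ (Units.val_eq_one.mp h)
  have hshift : ∑ χ : A →* Kˣ, (χ a : K) = (ψ a : K) * ∑ χ : A →* Kˣ, (χ a : K) := by
    rw [mul_sum]
    exact (Fintype.sum_equiv (Equiv.mulLeft ψ) _ _ fun χ => by simp).symm
  exact eq_zero_of_mul_eq_self_left hψ' hshift.symm

lemma sum_monoidHom_sum_mul [DecidableEq A] {ι : Type*} (s : Finset ι) (a : ι → A)
    (f : ι → K) :
    ∑ χ : A →* Kˣ, ∑ i ∈ s, (χ (a i) : K) * f i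
      = Nat.card A * ∑ i ∈ s with a i = 1, f i := by
  rw [sum_comm, sum_filter, mul_sum]
  refine sum_congr rfl fun i _ => ?_
  rw [← sum_mul, sum_monoidHom_apply]
  split_ifs <;> simp

lemma sum_monoidHom_sum_mul_sum [DecidableEq A] {ι κ : Type*} (s : Finset ι) (t : Finset κ)
    (a : ι → A) (b : κ → A) (f : ι → K) (g : κ → K) :
    ∑ χ : A →* Kˣ, (∑ i ∈ s, (χ (a i) : K) * f i) * (∑ j ∈ t, (χ (b j) : K) * g j)
      = Nat.card A * ∑ p ∈ s ×ˢ t with a p.1 * b p.2 = 1, f p.1 * g p.2 := by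
  rw [← sum_monoidHom_sum_mul]
  refine sum_congr rfl fun χ _ => ?_
  rw [sum_mul_sum, ← sum_product']
  refine sum_congr rfl fun p _ => ?_
  rw [map_mul, Units.val_mul]
  ring

lemma sum_monoidHom_sum_pow_mul_eq_zero (g : A) (f : ℕ → K) :
    ∑ χ : A →* Kˣ, ∑ k ∈ Ico 1 (orderOf g), (χ (g ^ k) : K) * f k = 0 := by
  classical
  rw [sum_monoidHom_sum_mul, filter_false_of_mem, sum_empty, mul_zero]
  intro k hk
  exact pow_ne_one_of_lt_orderOf (Nat.one_le_iff_ne_zero.mp (mem_Ico.mp hk).1) (mem_Ico.mp hk).2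

end Characters

lemma natCast_eq_sub_sum_apply_pow {A : Type*} [Monoid A] (χ : A →* ℂˣ) {g : A} {u : ℕ}
    (hu : u < orderOf g) (hχ : (χ g : ℂ) = ee (u / orderOf g)) :
    (u : ℂ) = ((orderOf g : ℂ) - 1) / 2
      - ∑ k ∈ Ico 1 (orderOf g), (χ (g ^ k) : ℂ) * (1 - ee (-k / orderOf g))⁻¹ := by
  simp only [map_pow, Units.val_pow_eq_pow_val, hχ]
  exact natCast_eq_sub_sum_ee hu

section Intersection

lemma orderOf_dvd_mul_card_of_pow_mem {G : Type*} [Group G] {g : G} {H : Subgroup G} {l : ℕ}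
    (hl : g ^ l ∈ H) : orderOf g ∣ l * Nat.card H :=
  orderOf_dvd_of_pow_eq_one <| by
    rw [pow_mul]
    exact congrArg Subtype.val (pow_card_eq_one' (x := (⟨g ^ l, hl⟩ : H)))

variable {A : Type*} [CommGroup A] {σ ρ : A} {d h : ℕ}

variable (σ ρ) in
lemma card_zpowers_inf_dvd_orderOf :
    Nat.card ↥(Subgroup.zpowers σ ⊓ Subgroup.zpowers ρ) ∣ orderOf σ ∧
      Nat.card ↥(Subgroup.zpowers σ ⊓ Subgroup.zpowers ρ) ∣ orderOf ρ :=
  ⟨Nat.card_zpowers σ ▸ Subgroup.card_dvd_of_le inf_le_left,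
    Nat.card_zpowers ρ ▸ Subgroup.card_dvd_of_le inf_le_right⟩

lemma dvd_of_pow_mem_zpowers [Finite A]
    (hd : d = Nat.card ↥(Subgroup.zpowers σ ⊓ Subgroup.zpowers ρ)) {l : ℕ}
    (hl : ρ ^ l ∈ Subgroup.zpowers σ) : orderOf ρ / d ∣ l := by
  have hmem : ρ ^ l ∈ Subgroup.zpowers σ ⊓ Subgroup.zpowers ρ :=
    ⟨hl, Subgroup.pow_mem _ (Subgroup.mem_zpowers ρ) l⟩
  have hdvd := orderOf_dvd_mul_card_of_pow_mem hmem
  have hdρ : d ∣ orderOf ρ := hd ▸ (card_zpowers_inf_dvd_orderOf σ ρ).2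
  rw [← hd, ← Nat.div_mul_cancel hdρ] at hdvd
  exact Nat.dvd_of_mul_dvd_mul_right (hd ▸ Nat.card_pos) hdvd

lemma exists_eq_mul_of_pow_mul_pow_eq_one [Finite A]
    (hd : d = Nat.card ↥(Subgroup.zpowers σ ⊓ Subgroup.zpowers ρ)) {k l : ℕ} (hl1 : 1 ≤ l)
    (hlρ : l < orderOf ρ) (hkl : σ ^ k * ρ ^ l = 1) :
    ∃ κ ∈ Ico 1 d, l = orderOf ρ / d * κ := by
  have hmem : ρ ^ l ∈ Subgroup.zpowers σ := by
    rw [eq_inv_of_mul_eq_one_right hkl]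
    exact inv_mem (Subgroup.npow_mem_zpowers σ _)
  obtain ⟨κ, hκ⟩ := dvd_of_pow_mem_zpowers hd hmem
  have hdρ : d ∣ orderOf ρ := hd ▸ (card_zpowers_inf_dvd_orderOf σ ρ).2
  refine ⟨κ, mem_Ico.mpr ⟨Nat.one_le_iff_ne_zero.mpr fun hκ0 => ?_, ?_⟩, hκ⟩
  · rw [hκ0, mul_zero] at hκ
    omega
  · refine Nat.lt_of_mul_lt_mul_left (a := orderOf ρ / d) ?_
    rwa [← hκ, Nat.div_mul_cancel hdρ]

lemma ee_neg_div_orderOf_eq_of_pow_mul_pow_eq_one [Finite A]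
    (hd : d = Nat.card ↥(Subgroup.zpowers σ ⊓ Subgroup.zpowers ρ))
    (hh : ρ ^ (orderOf ρ / d) = (σ ^ (orderOf σ / d)) ^ h) {k κ : ℕ}
    (hkκ : σ ^ k * ρ ^ (orderOf ρ / d * κ) = 1) :
    ee (-k / orderOf σ) = ee (κ * h / d) := by
  have hρσ : ρ ^ (orderOf ρ / d * κ) = σ ^ (orderOf σ / d * (h * κ)) := by
    rw [pow_mul, hh, ← pow_mul, ← pow_mul]
  have hdvd : orderOf σ ∣ k + orderOf σ / d * (h * κ) := by
    apply orderOf_dvd_of_pow_eq_one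
    rwa [pow_add, ← hρσ]
  rw [ee_neg_div_eq_of_dvd (orderOf_pos σ).ne'
    (Nat.div_mul_cancel (hd ▸ (card_zpowers_inf_dvd_orderOf σ ρ).1)) hdvd]
  push_cast
  ring_nf

lemma sum_pow_mul_pow_eq_one_eq_phi [Finite A] [DecidableEq A]
    (hd : d = Nat.card ↥(Subgroup.zpowers σ ⊓ Subgroup.zpowers ρ))
    (hh : ρ ^ (orderOf ρ / d) = (σ ^ (orderOf σ / d)) ^ h) :
    ∑ p ∈ Ico 1 (orderOf σ) ×ˢ Ico 1 (orderOf ρ) with σ ^ p.1 * ρ ^ p.2 = 1,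
      (1 - ee (-p.1 / orderOf σ))⁻¹ * (1 - ee (-p.2 / orderOf ρ))⁻¹ = phi h d 0 := by
  set e := orderOf ρ / d
  have he : e * d = orderOf ρ := Nat.div_mul_cancel (hd ▸ (card_zpowers_inf_dvd_orderOf σ ρ).2)
  have he0 : 0 < e := Nat.pos_of_mul_pos_right (he ▸ orderOf_pos ρ)
  have hP : ∀ p ∈ {p ∈ Ico 1 (orderOf σ) ×ˢ Ico 1 (orderOf ρ) | σ ^ p.1 * ρ ^ p.2 = 1},
      p.1 < orderOf σ ∧ σ ^ p.1 * ρ ^ p.2 = 1 ∧ ∃ κ ∈ Ico 1 d, p.2 = e * κ := by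
    intro p hp
    simp only [mem_filter, mem_product, mem_Ico] at hp
    exact ⟨hp.1.1.2, hp.2, exists_eq_mul_of_pow_mul_pow_eq_one hd hp.1.2.1 hp.1.2.2 hp.2⟩
  rw [phi_zero]
  refine sum_nbij (fun p => p.2 / e) ?_ ?_ ?_ ?_
  · intro p hp
    obtain ⟨-, -, κ, hκ, hp2⟩ := hP p hp
    simpa [hp2, he0] using hκ
  · intro p hp q hq hpq
    obtain ⟨hpσ, hp, κ, -, hp2⟩ := hP p hp
    obtain ⟨hqσ, hq, κ', -, hq2⟩ := hP q hq
    have h2 : p.2 = q.2 := by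
      simp only [hp2, hq2, Nat.mul_div_cancel_left _ he0] at hpq ⊢
      rw [hpq]
    have h1 : σ ^ p.1 = σ ^ q.1 := by
      rw [eq_inv_of_mul_eq_one_left hp, eq_inv_of_mul_eq_one_left hq, h2]
    exact Prod.ext (pow_injOn_Iio_orderOf hpσ hqσ h1) h2
  · intro κ hκ
    obtain ⟨hκ1, hκd⟩ := mem_Ico.mp hκ
    have hlρ : e * κ < orderOf ρ := he ▸ Nat.mul_lt_mul_of_pos_left hκd he0
    have hne : ρ ^ (e * κ) ≠ 1 := pow_ne_one_of_lt_orderOf (by positivity) hlρ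
    have hmem : (ρ ^ (e * κ))⁻¹ ∈ Subgroup.zpowers σ := by
      rw [pow_mul, hh, ← pow_mul, ← pow_mul]
      exact inv_mem (Subgroup.npow_mem_zpowers σ _)
    obtain ⟨k, hk, hkσ⟩ := mem_image.mp (mem_zpowers_iff_mem_range_orderOf.mp hmem)
    have hk0 : k ≠ 0 := fun hk0 => hne (inv_eq_one.mp (by rw [← hkσ, hk0, pow_zero]))
    refine ⟨(k, e * κ), ?_, by simp [he0]⟩
    simp only [coe_filter, Set.mem_ofPred_eq, mem_product, mem_Ico]
    refine ⟨⟨⟨Nat.one_le_iff_ne_zero.mpr hk0, mem_range.mp hk⟩,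
      Nat.mul_pos he0 hκ1, hlρ⟩, ?_⟩
    rw [hkσ, inv_mul_cancel]
  · intro p hp
    obtain ⟨-, hp, κ, -, hp2⟩ := hP p hp
    have hρ : ee (-p.2 / orderOf ρ) = ee (-κ / d) := by
      rw [hp2, ← he]
      congr 1
      push_cast
      field_simp
    rw [hp2] at hp
    rw [ee_neg_div_orderOf_eq_of_pow_mul_pow_eq_one hd hh hp, hρ, hp2,
      Nat.mul_div_cancel_left _ he0, Int.cast_natCast]

end Intersection

theorem gamma_eq_phi_general {A : Type*} [CommGroup A] [Fintype A] [Fintype (A →* ℂˣ)]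
    (σ ρ : A)
    (d : ℕ) (hd : d = Nat.card ↥(Subgroup.zpowers σ ⊓ Subgroup.zpowers ρ))
    (h : ℕ) (hh : ρ ^ (orderOf ρ / d) = (σ ^ (orderOf σ / d)) ^ h)
    (uσ uρ : (A →* ℂˣ) → ℕ)
    (huσ : ∀ χ : A →* ℂˣ, uσ χ < orderOf σ ∧ (χ σ : ℂ) = ee ((uσ χ : ℝ) / orderOf σ))
    (huρ : ∀ χ : A →* ℂˣ, uρ χ < orderOf ρ ∧ (χ ρ : ℂ) = ee ((uρ χ : ℝ) / orderOf ρ)) :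
    (1 / (Fintype.card A : ℂ)) *
        ∑ χ : A →* ℂˣ, ((uσ χ : ℂ) * (uρ χ : ℂ)) / ((orderOf σ : ℂ) * (orderOf ρ : ℂ))
      = phi (h : ℤ) d 0 / ((orderOf σ : ℂ) * (orderOf ρ : ℂ))
        + ((orderOf σ : ℂ) - 1) * ((orderOf ρ : ℂ) - 1)
            / (4 * (orderOf σ : ℂ) * (orderOf ρ : ℂ)) := by
  classical
  set Fσ : (A →* ℂˣ) → ℂ := fun χ =>
    ∑ k ∈ Ico 1 (orderOf σ), (χ (σ ^ k) : ℂ) * (1 - ee (-k / orderOf σ))⁻¹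
  set Fρ : (A →* ℂˣ) → ℂ := fun χ =>
    ∑ l ∈ Ico 1 (orderOf ρ), (χ (ρ ^ l) : ℂ) * (1 - ee (-l / orderOf ρ))⁻¹
  have hσ χ : (uσ χ : ℂ) = ((orderOf σ : ℂ) - 1) / 2 - Fσ χ :=
    natCast_eq_sub_sum_apply_pow χ (huσ χ).1 (huσ χ).2
  have hρ χ : (uρ χ : ℂ) = ((orderOf ρ : ℂ) - 1) / 2 - Fρ χ :=
    natCast_eq_sub_sum_apply_pow χ (huρ χ).1 (huρ χ).2
  have hFσ : ∑ χ, Fσ χ = 0 := sum_monoidHom_sum_pow_mul_eq_zero σ _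
  have hFρ : ∑ χ, Fρ χ = 0 := sum_monoidHom_sum_pow_mul_eq_zero ρ _
  have hFσρ : ∑ χ, Fσ χ * Fρ χ = Fintype.card A * phi h d 0 := by
    rw [sum_monoidHom_sum_mul_sum, sum_pow_mul_pow_eq_one_eq_phi hd hh,
      Nat.card_eq_fintype_card]
  have hcard : Fintype.card (A →* ℂˣ) = Fintype.card A := by
    simpa only [Nat.card_eq_fintype_card] using
      CommGroup.card_monoidHom_of_hasEnoughRootsOfUnity A ℂ
  have key : ∑ χ, (uσ χ : ℂ) * uρ χ
      = Fintype.card A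
          * (((orderOf σ : ℂ) - 1) / 2 * (((orderOf ρ : ℂ) - 1) / 2) + phi h d 0) := by
    simp only [hσ, hρ, sub_mul, mul_sub, sum_sub_distrib, ← mul_sum, ← sum_mul, sum_const,
      card_univ, nsmul_eq_mul, hcard, hFσ, hFρ, hFσρ]
    ring
  rw [← sum_div, key]
  field_simp
  ring

theorem gamma_eq_phi {A : Type*} [CommGroup A] [Fintype A] [Fintype (A →* ℂˣ)]
    (σ ρ : A) (hσ : σ ≠ 1) (hρ : ρ ≠ 1)
    (d : ℕ) (hd : d = Nat.card ↥(Subgroup.zpowers σ ⊓ Subgroup.zpowers ρ))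
    (h : ℕ) (hh : ρ ^ (orderOf ρ / d) = (σ ^ (orderOf σ / d)) ^ h)
    (uσ uρ : (A →* ℂˣ) → ℕ)
    (huσ : ∀ χ : A →* ℂˣ, uσ χ < orderOf σ ∧ (χ σ : ℂ) = ee ((uσ χ : ℝ) / orderOf σ))
    (huρ : ∀ χ : A →* ℂˣ, uρ χ < orderOf ρ ∧ (χ ρ : ℂ) = ee ((uρ χ : ℝ) / orderOf ρ)) :
    (1 / (Fintype.card A : ℂ)) *
        ∑ χ : A →* ℂˣ, ((uσ χ : ℂ) * (uρ χ : ℂ)) / ((orderOf σ : ℂ) * (orderOf ρ : ℂ))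
      = phi (h : ℤ) d 0 / ((orderOf σ : ℂ) * (orderOf ρ : ℂ))
        + ((orderOf σ : ℂ) - 1) * ((orderOf ρ : ℂ) - 1)
            / (4 * (orderOf σ : ℂ) * (orderOf ρ : ℂ)) :=
  gamma_eq_phi_general σ ρ d hd h hh uσ uρ huσ huρ
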